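/- arXiv:2010.09963 — 2 statements merged into one kernel-verified Lean document; each statement's English description precedes it below -/
import Mathlib

section
/- Let b ∈ ℕ³ and suppose K^b I is disconnected (equivalently dim_k H̃₀(K^b I;k) ≠ 0), that v = i is an isolated vertex of K^b I (i.e. {i} ∈ K^b I but no edge of K^b I contains i), and that a ∈ ℕ³ is such that x^a is a minimal monomial generator of I and b − a = n·e_i for some n ≥ 1 (so a is the unique generator degree lying behind b in the i-direction). Then the degree-0 canonical sylvan matrix entry from the vertex i to the empty face ∅ satisfies D_{∅,i}^{a,b} = 1. -/
/-!
Since `b - a = n·e_i`, the only lattice path from `b` to `a` goes straight down in direction `i`,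
and every Koszul complex on it is forced: `K^a I = {∅}` because `x^a` is a minimal generator, and
each interior complex is the segment `{∅, {i}}`, because a face through a vertex `j ≠ i` one step
below `b` would make `{i, j}` an edge of `K^b I`. So the interior hedges and the bottom shrubbery
are unique, a hedgerow is just a stake set of `K^b I`, and each hedgerow carries exactly one fence
from `{i}` to `∅`, all of whose links have coefficient `1` (an isolated vertex is never a stake,
so it is its own hedge rim). Hence the fences are counted by `Δ`, which is one of `1, …, 4` and
so is invertible when `char k ∉ {2, 3}`.
-/

open Classical

noncomputable section

namespace Sylvan

/-- Exponent vectors in three variables. -/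
abbrev V3 := Fin 3 → ℕ

/-- The `i`-th standard basis vector. -/
def stdVec (i : Fin 3) : V3 := fun j => if j = i then 1 else 0

/-- A monomial ideal, identified with its (upward closed) set of exponent vectors. -/
def IsMonomialIdeal (I : Set V3) : Prop :=
  ∀ ⦃c d : V3⦄, c ∈ I → (∀ i, c i ≤ d i) → d ∈ I

/-- The 0-1 indicator vector of a squarefree face. -/
def ind (τ : Finset (Fin 3)) : V3 := fun i => if i ∈ τ then 1 else 0

/-- The Koszul simplicial complex of `I` in degree `b`:
faces `τ` with `b ≥ τ` and `x^(b-τ) ∈ I`. -/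
def K (I : Set V3) (b : V3) : Set (Finset (Fin 3)) :=
  {τ | (∀ i, ind τ i ≤ b i) ∧ (fun i => b i - ind τ i) ∈ I}

/-- `x^a` is a minimal monomial generator of `I`. -/
def IsMinGen (I : Set V3) (a : V3) : Prop :=
  a ∈ I ∧ ∀ c ∈ I, (∀ i, c i ≤ a i) → c = a

/-- Reduced simplicial chains: formal `k`-linear combinations of faces
(the empty face included). -/
abbrev Ch (k : Type) [Field k] := Finset (Fin 3) →₀ k

variable (k : Type) [Field k]

/-- The sign `(-1)^(position of v in σ)`. -/
def esgn (v : Fin 3) (σ : Finset (Fin 3)) : ℤ :=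
  (-1 : ℤ) ^ (σ.filter (fun u => u < v)).card

/-- The boundary of a single face. -/
def bd (σ : Finset (Fin 3)) : Ch k :=
  ∑ v ∈ σ, Finsupp.single (σ.erase v) ((esgn v σ : ℤ) : k)

/-- The (reduced) simplicial boundary operator. -/
def bdry : Ch k →ₗ[k] Ch k :=
  Finsupp.lsum k fun σ => LinearMap.toSpanSingleton k (Ch k) (bd k σ)

/-- `coeffSign k v σ` is the coefficient of `σ \ {v}` in `∂σ`,
i.e. the sign `(-1)^{v,σ}` of the paper. -/
def coeffSign (v : Fin 3) (σ : Finset (Fin 3)) : k :=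
  bdry k (Finsupp.single σ (1:k)) (σ.erase v)

/-- Faces of cardinality `c` (dimension `c-1`) of a simplicial complex. -/
def faces (Kc : Set (Finset (Fin 3))) (c : ℕ) : Set (Finset (Fin 3)) :=
  {σ | σ ∈ Kc ∧ σ.card = c}

/-- Basis chains attached to a set of faces. -/
def sset (A : Set (Finset (Fin 3))) : Set (Ch k) :=
  (fun σ => Finsupp.single σ (1:k)) '' A

/-- The chain group `C̃_{c-1}(K;k)`, as the span of its card-`c` faces. -/
def chains (Kc : Set (Finset (Fin 3))) (c : ℕ) : Submodule k (Ch k) :=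
  Submodule.span k (sset k (faces Kc c))

/-- The boundaries `B̃_{c-1}(K;k) = ∂ C̃_c(K;k)`, sitting among card-`c` chains. -/
def bdries (Kc : Set (Finset (Fin 3))) (c : ℕ) : Submodule k (Ch k) :=
  (chains k Kc (c+1)).map (bdry k)

/-- A shrubbery in dimension `c-1` (faces of cardinality `c`): a set `T` of card-`c`
faces whose boundaries form a basis of `∂ C̃_{c-1}(K;k)`. -/
def IsShrubbery (Kc : Set (Finset (Fin 3))) (c : ℕ) (T : Finset (Finset (Fin 3))) : Prop :=
  (T : Set (Finset (Fin 3))) ⊆ faces Kc c ∧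
  LinearIndependent k
    (fun σ : (T : Set (Finset (Fin 3))) => bdry k (Finsupp.single (σ : Finset (Fin 3)) (1:k))) ∧
  Submodule.span k ((fun σ => bdry k (Finsupp.single σ (1:k))) '' (T : Set (Finset (Fin 3)))) =
    (chains k Kc c).map (bdry k)

/-- A stake set in dimension `c-1` (faces of cardinality `c`): a set `S` of card-`c`
faces whose complement maps to a basis of `C̃/B̃`. -/
def IsStakeSet (Kc : Set (Finset (Fin 3))) (c : ℕ) (S : Finset (Finset (Fin 3))) : Prop :=
  (S : Set (Finset (Fin 3))) ⊆ faces Kc c ∧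
  Submodule.span k (sset k (faces Kc c \ (S : Set (Finset (Fin 3))))) ⊓ bdries k Kc c = ⊥ ∧
  Submodule.span k (sset k (faces Kc c \ (S : Set (Finset (Fin 3))))) ⊔ bdries k Kc c =
    chains k Kc c

/-- The circuit `ζ(τ)` of a face `τ` with respect to a shrubbery `T`:
the unique cycle of the form `τ - t` with `t ∈ span T`. -/
def circuit (T : Finset (Finset (Fin 3))) (τ : Finset (Fin 3)) : Ch k :=
  if h : ∃! z : Ch k, bdry k z = 0 ∧
      Finsupp.single τ (1:k) - z ∈ Submodule.span k (sset k (T : Set (Finset (Fin 3))))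
  then h.exists.choose else 0

/-- The shrub `s(σ)` of a stake `σ` with respect to a hedge `(S,T)`:
the unique chain in `span T` whose boundary has coefficient `1` on `σ` and `0`
on all other stakes. -/
def shrub (S T : Finset (Finset (Fin 3))) (σ : Finset (Fin 3)) : Ch k :=
  if h : ∃! s : Ch k, s ∈ Submodule.span k (sset k (T : Set (Finset (Fin 3)))) ∧
      bdry k s σ = 1 ∧ ∀ σ' ∈ S, σ' ≠ σ → bdry k s σ' = 0
  then h.exists.choose else 0

/-- The hedge rim `r(τ)` of a face `τ` with respect to a stake set `S`:
the unique chain supported outside `S` with `τ - r(τ)` a boundary. -/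
def hedgeRim (Kc : Set (Finset (Fin 3))) (c : ℕ) (S : Finset (Finset (Fin 3)))
    (τ : Finset (Fin 3)) : Ch k :=
  if h : ∃! r : Ch k,
      r ∈ Submodule.span k (sset k (faces Kc c \ (S : Set (Finset (Fin 3))))) ∧
      Finsupp.single τ (1:k) - r ∈ bdries k Kc c
  then h.exists.choose else 0

/-- The points of the saturated decreasing lattice path from `pt a d n` down to `a`
encoded by the list of directions `d` (read from `a` upwards). -/
def pt (a : V3) {n : ℕ} (d : Fin n → Fin 3) (m : ℕ) : V3 :=
  fun i => a i + ∑ m' ∈ Finset.range m, (if h : m' < n then stdVec (d ⟨m', h⟩) i else 0)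

/-- The data of a hedgerow: `(Sb, S, T, Ta)`. -/
abbrev HRData (n : ℕ) :=
  Finset (Finset (Fin 3)) × (Fin (n+1) → Finset (Finset (Fin 3))) ×
    (Fin (n+1) → Finset (Finset (Fin 3))) × Finset (Finset (Fin 3))

/-- A hedgerow in homological dimension `c-1` along the lattice path from `pt a d n`
down to `a`: a stake set in the Koszul complex at the top, a hedge at each interior
lattice point, and a shrubbery at the bottom.  (Unused components are pinned to `∅`.) -/
def IsHedgerow (I : Set V3) (a : V3) {n : ℕ} (d : Fin n → Fin 3) (c : ℕ)
    (h : HRData n) : Prop :=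
  IsStakeSet k (K I (pt a d n)) c h.1 ∧
  (∀ m : Fin (n+1), 0 < (m:ℕ) → (m:ℕ) < n →
    IsStakeSet k (K I (pt a d m)) (c-1) (h.2.1 m) ∧
    IsShrubbery k (K I (pt a d m)) c (h.2.2.1 m)) ∧
  (∀ m : Fin (n+1), ((m:ℕ) = 0 ∨ (m:ℕ) = n) → h.2.1 m = ∅ ∧ h.2.2.1 m = ∅) ∧
  IsShrubbery k (K I a) (c-1) h.2.2.2

/-- `Δ_{c-1,λ} I`: the number of hedgerows along the lattice path. -/
def Delta (I : Set V3) (a : V3) {n : ℕ} (d : Fin n → Fin 3) (c : ℕ) : ℕ :=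
  Nat.card {h : HRData n // IsHedgerow k I a d c h}

/-- The data of a chain-link fence: a hedgerow together with the faces `τ_ℓ` and
`σ_ℓ` (indexed here by the lattice point `pt a d m`, so `τ_ℓ = tau (n-ℓ)` and
`σ_ℓ = sig (n-ℓ)`). -/
abbrev FData (n : ℕ) :=
  HRData n × (Fin (n+1) → Finset (Fin 3)) × (Fin (n+1) → Finset (Fin 3))

/-- A chain-link fence from the card-`c` face `τtop` of the Koszul complex at the top
of the lattice path to the card-`(c-1)` face `σbot` of the Koszul complex at the
bottom. -/
def IsFence (I : Set V3) (a : V3) {n : ℕ} (d : Fin n → Fin 3) (c : ℕ)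
    (σbot τtop : Finset (Fin 3)) (f : FData n) : Prop :=
  IsHedgerow k I a d c f.1 ∧
  (∀ m : Fin (n+1), 0 < (m:ℕ) → f.2.1 m ∈ faces (K I (pt a d m)) c) ∧
  (∀ m : Fin (n+1), (m:ℕ) < n → f.2.2 m ∈ faces (K I (pt a d m)) (c-1)) ∧
  f.2.1 0 = ∅ ∧ f.2.2 (Fin.last n) = ∅ ∧
  hedgeRim k (K I (pt a d n)) c f.1.1 τtop (f.2.1 (Fin.last n)) ≠ 0 ∧
  (∀ m : Fin n, f.2.2 m.castSucc = (f.2.1 m.succ).erase (d m)) ∧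
  (∀ m : Fin (n+1), 0 < (m:ℕ) → (m:ℕ) < n →
    f.2.2 m ∈ f.1.2.1 m ∧
    shrub k (f.1.2.1 m) (f.1.2.2.1 m) (f.2.2 m) (f.2.1 m) ≠ 0) ∧
  circuit k f.1.2.2.2 (f.2.2 0) σbot ≠ 0

/-- The weight of a chain-link fence: the product of the boundary-link coefficient,
the chain-link coefficients, the containment coefficients, and the cycle-link
coefficient. -/
def weight (I : Set V3) (a : V3) {n : ℕ} (d : Fin n → Fin 3) (c : ℕ)
    (σbot τtop : Finset (Fin 3)) (f : FData n) : k :=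
  hedgeRim k (K I (pt a d n)) c f.1.1 τtop (f.2.1 (Fin.last n)) *
  (∏ m : Fin (n+1), if 0 < (m:ℕ) ∧ (m:ℕ) < n
      then shrub k (f.1.2.1 m) (f.1.2.2.1 m) (f.2.2 m) (f.2.1 m) else 1) *
  (∏ m : Fin n, bdry k (Finsupp.single (f.2.1 m.succ) (1:k)) (f.2.2 m.castSucc)) *
  circuit k f.1.2.2.2 (f.2.2 0) σbot

/-- `D_{σ,τ}^{a,b,λ}`: the contribution of the single lattice path `λ` (encoded by
its direction sequence `d`) to the canonical sylvan matrix entry. -/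
def Dpath (I : Set V3) (a : V3) {n : ℕ} (d : Fin n → Fin 3) (c : ℕ)
    (σbot τtop : Finset (Fin 3)) : k :=
  ((Delta k I a d c : k))⁻¹ *
    ∑ᶠ f ∈ {f : FData n | IsFence k I a d c σbot τtop f}, weight k I a d c σbot τtop f

/-- `|b - a|`, the common length of all saturated decreasing lattice paths. -/
def nlen (a b : V3) : ℕ := ∑ i, (b i - a i)

/-- The canonical sylvan matrix entry `D_{σ,τ}^{a,b}`: a sum over all saturated
decreasing lattice paths from `b` to `a`. -/
def D (I : Set V3) (a b : V3) (c : ℕ) (σbot τtop : Finset (Fin 3)) : k :=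
  ∑ᶠ d ∈ {d : Fin (nlen a b) → Fin 3 | pt a d (nlen a b) = b},
    Dpath k I a d c σbot τtop

/-- `K` has exactly the set `F` as facets, i.e. it is the downward closure of `F`. -/
def hasFacets (Kc F : Set (Finset (Fin 3))) : Prop :=
  Kc = {σ | ∃ f ∈ F, σ ⊆ f}

/-- `dim_k H̃₀(K;k) ≠ 0`: some reduced 0-cycle is not a boundary. -/
def H0nontrivial (Kc : Set (Finset (Fin 3))) : Prop :=
  ¬ (chains k Kc 1 ⊓ LinearMap.ker (bdry k) ≤ bdries k Kc 1)

@[simp]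
lemma bdry_single (σ : Finset (Fin 3)) (x : k) :
    bdry k (Finsupp.single σ x) = x • bd k σ := by
  rw [bdry, Finsupp.lsum_single, LinearMap.toSpanSingleton_apply]

@[simp]
lemma bd_empty : bd k ∅ = 0 := by
  simp [bd]

@[simp]
lemma bd_singleton (v : Fin 3) : bd k {v} = Finsupp.single ∅ 1 := by
  simp [bd, esgn, Finset.filter_singleton]

lemma span_sset (A : Set (Finset (Fin 3))) :
    Submodule.span k (sset k A) = Finsupp.supported k k A :=
  (Finsupp.supported_eq_span_single k A).symm

lemma bdries_eq_span (Kc : Set (Finset (Fin 3))) (c : ℕ) :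
    bdries k Kc c = Submodule.span k (bd k '' faces Kc (c + 1)) := by
  rw [bdries, chains, Submodule.map_span, sset, Set.image_image]
  simp

lemma bdries_le_chains {Kc : Set (Finset (Fin 3))} (hK : IsLowerSet Kc) (c : ℕ) :
    bdries k Kc c ≤ chains k Kc c := by
  rw [bdries_eq_span, chains, span_sset, Submodule.span_le]
  rintro _ ⟨σ, ⟨hσ, hcard⟩, rfl⟩
  refine Submodule.sum_mem _ fun v hv => Finsupp.single_mem_supported k _ ⟨?_, ?_⟩
  · exact hK (Finset.erase_subset v σ) hσ
  · rw [Finset.card_erase_of_mem hv, hcard, Nat.add_sub_cancel]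

/-- A subfamily of the faces whose classes form a basis of `C̃ / B̃` exists by Zorn's lemma; its
complement is a stake set. -/
lemma exists_isStakeSet {Kc : Set (Finset (Fin 3))} (hK : IsLowerSet Kc) (c : ℕ) :
    ∃ S, IsStakeSet k Kc c S := by
  obtain ⟨F, hFfaces, -, hspan, hind⟩ := exists_linearIndepOn_extension
    (v := (bdries k Kc c).mkQ ∘ fun σ => Finsupp.single σ (1 : k)) (linearIndepOn_empty k _)
    (Set.empty_subset (faces Kc c))
  refine ⟨(faces Kc c \ F).toFinset, ?_, ?_, ?_⟩
  · simp
  · rw [Set.coe_toFinset, Set.sdiff_sdiff_cancel_left hFfaces, ← disjoint_iff]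
    simpa [sset, Set.image_eq_range] using Submodule.range_ker_disjoint hind
  · rw [Set.coe_toFinset, Set.sdiff_sdiff_cancel_left hFfaces]
    refine le_antisymm (sup_le (Submodule.span_mono (Set.image_mono hFfaces))
      (bdries_le_chains k hK c)) ?_
    rw [chains, Submodule.span_le]
    rintro _ ⟨σ, hσ, rfl⟩
    have hclass := hspan ⟨σ, hσ, rfl⟩
    rw [Set.image_comp, Submodule.span_image] at hclass
    rw [sup_comm, ← Submodule.comap_map_mkQ]
    exact hclass

lemma circuit_eq {T : Finset (Finset (Fin 3))} {τ : Finset (Fin 3)} {z : Ch k}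
    (hz : bdry k z = 0 ∧ Finsupp.single τ 1 - z ∈ Submodule.span k (sset k ↑T))
    (hu : ∀ w, bdry k w = 0 ∧ Finsupp.single τ 1 - w ∈ Submodule.span k (sset k ↑T) → w = z) :
    circuit k T τ = z := by
  have h : ∃! w, bdry k w = 0 ∧ Finsupp.single τ 1 - w ∈ Submodule.span k (sset k ↑T) :=
    ⟨z, hz, hu⟩
  rw [circuit, dif_pos h]
  exact hu _ h.exists.choose_spec

lemma shrub_eq {S T : Finset (Finset (Fin 3))} {σ : Finset (Fin 3)} {z : Ch k}
    (hz : z ∈ Submodule.span k (sset k ↑T) ∧ bdry k z σ = 1 ∧ ∀ σ' ∈ S, σ' ≠ σ → bdry k z σ' = 0)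
    (hu : ∀ w, w ∈ Submodule.span k (sset k ↑T) ∧ bdry k w σ = 1 ∧
      (∀ σ' ∈ S, σ' ≠ σ → bdry k w σ' = 0) → w = z) :
    shrub k S T σ = z := by
  have h : ∃! w, w ∈ Submodule.span k (sset k ↑T) ∧ bdry k w σ = 1 ∧
      ∀ σ' ∈ S, σ' ≠ σ → bdry k w σ' = 0 := ⟨z, hz, hu⟩
  rw [shrub, dif_pos h]
  exact hu _ h.exists.choose_spec

lemma hedgeRim_eq {Kc : Set (Finset (Fin 3))} {c : ℕ} {S : Finset (Finset (Fin 3))}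
    {τ : Finset (Fin 3)} {z : Ch k}
    (hz : z ∈ Submodule.span k (sset k (faces Kc c \ ↑S)) ∧ Finsupp.single τ 1 - z ∈ bdries k Kc c)
    (hu : ∀ w, w ∈ Submodule.span k (sset k (faces Kc c \ ↑S)) ∧
      Finsupp.single τ 1 - w ∈ bdries k Kc c → w = z) :
    hedgeRim k Kc c S τ = z := by
  have h : ∃! w, w ∈ Submodule.span k (sset k (faces Kc c \ ↑S)) ∧
      Finsupp.single τ 1 - w ∈ bdries k Kc c := ⟨z, hz, hu⟩
  rw [hedgeRim, dif_pos h]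
  exact hu _ h.exists.choose_spec

section IsolatedVertex

variable {k} {Kc : Set (Finset (Fin 3))} {i : Fin 3} {S : Finset (Finset (Fin 3))}

/-- Both the chains off the stakes and the boundaries of edges vanish on `{i}`. -/
lemma singleton_notMem_of_isStakeSet (hi : {i} ∈ Kc) (hiso : ∀ σ ∈ Kc, σ.card = 2 → i ∉ σ)
    (hS : IsStakeSet k Kc 1 S) : {i} ∉ S := by
  intro hmem
  let eval : Ch k →ₗ[k] k := Finsupp.lapply {i}
  have hoff : Submodule.span k (sset k (faces Kc 1 \ ↑S)) ≤ LinearMap.ker eval := by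
    rw [span_sset]
    intro x hx
    exact Finsupp.notMem_support_iff.1 fun h => (hx h).2 hmem
  have hbd : bdries k Kc 1 ≤ LinearMap.ker eval := by
    rw [bdries_eq_span, Submodule.span_le]
    rintro _ ⟨σ, ⟨hσ, hcard⟩, rfl⟩
    simp only [SetLike.mem_coe, LinearMap.mem_ker, eval, Finsupp.lapply_apply, bd,
      Finsupp.finsetSum_apply]
    refine Finset.sum_eq_zero fun v _ => Finsupp.single_eq_of_ne' fun h => ?_
    exact hiso σ hσ hcard (Finset.mem_of_mem_erase (h ▸ Finset.mem_singleton_self i))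
  have hchain : Finsupp.single {i} (1 : k) ∈ chains k Kc 1 :=
    Submodule.subset_span ⟨{i}, ⟨hi, Finset.card_singleton i⟩, rfl⟩
  rw [← hS.2.2] at hchain
  simpa [eval] using sup_le hoff hbd hchain

lemma hedgeRim_singleton_of_isolated (hi : {i} ∈ Kc) (hiso : ∀ σ ∈ Kc, σ.card = 2 → i ∉ σ)
    (hS : IsStakeSet k Kc 1 S) : hedgeRim k Kc 1 S {i} = Finsupp.single {i} 1 := by
  have hoff : Finsupp.single {i} (1 : k) ∈ Submodule.span k (sset k (faces Kc 1 \ ↑S)) :=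
    Submodule.subset_span ⟨{i}, ⟨⟨hi, Finset.card_singleton i⟩,
      singleton_notMem_of_isStakeSet hi hiso hS⟩, rfl⟩
  refine hedgeRim_eq k ⟨hoff, by simp⟩ fun w ⟨hw, hwb⟩ => ?_
  rw [← sub_eq_zero, ← Submodule.mem_bot k, ← hS.2.1]
  exact ⟨Submodule.sub_mem _ hw hoff, by simpa using Submodule.neg_mem _ hwb⟩

lemma ncard_isStakeSet_le_four (hi : {i} ∈ Kc) (hiso : ∀ σ ∈ Kc, σ.card = 2 → i ∉ σ) :
    {S | IsStakeSet k Kc 1 S}.ncard ≤ 4 := by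
  let others : Finset (Finset (Fin 3)) := (Finset.univ.erase i).image singleton
  have hothers : others.card = 2 := by
    rw [Finset.card_image_of_injective _ Finset.singleton_injective,
      Finset.card_erase_of_mem (Finset.mem_univ i), Finset.card_univ, Fintype.card_fin]
  calc {S | IsStakeSet k Kc 1 S}.ncard
      ≤ (others.powerset : Set (Finset (Finset (Fin 3)))).ncard := by
        refine Set.ncard_le_ncard fun S hS => Finset.mem_powerset.2 fun σ hσ => ?_
        obtain ⟨v, rfl⟩ := Finset.card_eq_one.1 (hS.1 hσ).2
        have hvi : v ≠ i := by
          rintro rfl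
          exact singleton_notMem_of_isStakeSet hi hiso hS hσ
        simpa [others] using hvi
    _ = 4 := by rw [Set.ncard_coe_finset, Finset.card_powerset, hothers]; rfl

end IsolatedVertex

section SmallComplexes

variable (i : Fin 3)

lemma faces_point_zero : faces {∅} 0 = {∅} := by
  ext σ
  simp [faces]

lemma faces_segment_zero : faces {∅, {i}} 0 = {∅} := by
  ext σ
  simp +contextual [faces, Finset.card_eq_zero]

lemma faces_segment_one : faces {∅, {i}} 1 = {{i}} := by
  ext σ
  simp only [faces, Set.mem_insert_iff, Set.mem_singleton_iff, Set.mem_ofPred_eq]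
  constructor
  · rintro ⟨rfl | rfl, h⟩
    · simp at h
    · rfl
  · rintro rfl
    simp

lemma span_single_empty_eq_bdries_segment :
    Submodule.span k {Finsupp.single ∅ 1} = bdries k {∅, {i}} 0 := by
  rw [bdries_eq_span, faces_segment_one, Set.image_singleton, bd_singleton]

lemma isShrubbery_point_iff (T : Finset (Finset (Fin 3))) :
    IsShrubbery k {∅} 0 T ↔ T = ∅ := by
  constructor
  · rintro ⟨hsub, hind, -⟩
    refine Finset.eq_empty_of_forall_notMem fun σ hσ => hind.ne_zero ⟨σ, hσ⟩ ?_
    have hσ0 : σ = ∅ := by simpa [faces_point_zero] using hsub hσ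
    simp [hσ0]
  · rintro rfl
    refine ⟨by simp, ?_, ?_⟩
    · rw [Finset.coe_empty]
      exact linearIndependent_empty_type
    · simp [chains, span_sset, faces_point_zero, Finsupp.supported_eq_span_single,
        Submodule.map_span]

lemma isStakeSet_segment_iff (S : Finset (Finset (Fin 3))) :
    IsStakeSet k {∅, {i}} 0 S ↔ S = {∅} := by
  have hchains : chains k {∅, {i}} 0 = bdries k {∅, {i}} 0 := by
    rw [chains, faces_segment_zero, sset, Set.image_singleton,
      span_single_empty_eq_bdries_segment]
  constructor
  · rintro ⟨hsub, hdisj, -⟩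
    rcases Finset.subset_singleton_iff.1 fun σ hσ => by simpa [faces_segment_zero] using hsub hσ
      with rfl | rfl
    · rw [Finset.coe_empty, Set.sdiff_empty, ← chains, hchains, inf_idem,
        ← span_single_empty_eq_bdries_segment, Submodule.span_singleton_eq_bot] at hdisj
      simp at hdisj
    · rfl
  · rintro rfl
    simp [IsStakeSet, faces_segment_zero, sset, hchains]

lemma isShrubbery_segment_iff (T : Finset (Finset (Fin 3))) :
    IsShrubbery k {∅, {i}} 1 T ↔ T = {{i}} := by
  have hbdries : (chains k {∅, {i}} 1).map (bdry k) = Submodule.span k {Finsupp.single ∅ 1} :=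
    (span_single_empty_eq_bdries_segment k i).symm
  constructor
  · rintro ⟨hsub, -, hspan⟩
    rcases Finset.subset_singleton_iff.1 fun σ hσ => by simpa [faces_segment_one] using hsub hσ
      with rfl | rfl
    · rw [hbdries, Finset.coe_empty, Set.image_empty, Submodule.span_empty, eq_comm,
        Submodule.span_singleton_eq_bot] at hspan
      simp at hspan
    · rfl
  · rintro rfl
    refine ⟨by simp [faces_segment_one], ?_, by simp [hbdries]⟩
    rw [Finset.coe_singleton]
    exact linearIndependent_unique_iff.2 (by simp)

lemma circuit_empty_empty : circuit k ∅ ∅ = Finsupp.single ∅ 1 :=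
  circuit_eq k (by simp) fun w ⟨_, hw⟩ => by
    simpa [sset, sub_eq_zero, eq_comm] using hw

lemma shrub_segment : shrub k {∅} {{i}} ∅ = Finsupp.single {i} 1 := by
  refine shrub_eq k ⟨Submodule.subset_span ⟨{i}, by simp, rfl⟩, by simp, by simp⟩ ?_
  rintro w ⟨hw, hw1, -⟩
  rw [span_sset, Finset.coe_singleton, Finsupp.mem_supported, Set.subset_singleton_iff] at hw
  have hw_single : w = Finsupp.single {i} (w {i}) :=
    Finsupp.support_subset_singleton.1 fun σ hσ => by simpa using hw σ hσ
  rw [hw_single] at hw1 ⊢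
  simp only [bdry_single, bd_singleton, Finsupp.smul_single, smul_eq_mul, mul_one,
    Finsupp.single_eq_same] at hw1
  rw [hw1]

end SmallComplexes

section Koszul

variable {I : Set V3}

lemma K_isLowerSet (hI : IsMonomialIdeal I) (c : V3) : IsLowerSet (K I c) := by
  rintro τ τ' (hsub : τ' ⊆ τ) ⟨hle, hmem⟩
  have hind : ∀ q, ind τ' q ≤ ind τ q := fun q => by
    unfold ind
    split_ifs with h h' <;> simp_all [Finset.subset_iff]
  exact ⟨fun q => (hind q).trans (hle q), hI hmem fun q => Nat.sub_le_sub_left (hind q) _⟩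

lemma mem_K_of_add_ind_le (hI : IsMonomialIdeal I) {a c : V3} (ha : a ∈ I) {τ : Finset (Fin 3)}
    (h : ∀ q, a q + ind τ q ≤ c q) : τ ∈ K I c :=
  ⟨fun q => (Nat.le_add_left _ _).trans (h q), hI ha fun q => Nat.le_sub_of_add_le (h q)⟩

lemma K_eq_of_isMinGen {a : V3} (hgen : IsMinGen I a) : K I a = {∅} := by
  ext σ
  refine ⟨fun ⟨hle, hmem⟩ => ?_, fun hσ => ?_⟩
  · have hsub := hgen.2 _ hmem fun q => Nat.sub_le _ _
    refine Finset.eq_empty_of_forall_notMem fun v hv => ?_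
    have h1 := hle v
    have h2 := congrFun hsub v
    simp only [ind, hv, if_true] at h1 h2
    omega
  · rw [Set.mem_singleton_iff.1 hσ]
    exact ⟨fun q => by simp [ind], by simpa [ind] using hgen.1⟩

lemma pair_mem_K_of_mem_K (hI : IsMonomialIdeal I) {b c : V3} {i : Fin 3}
    (hcb : ∀ q, c q + stdVec i q ≤ b q) {σ : Finset (Fin 3)} (hσ : σ ∈ K I c) {j : Fin 3}
    (hj : j ∈ σ) : {i, j} ∈ K I b := by
  have hind : ∀ q, ind {i, j} q ≤ stdVec i q + ind σ q := fun q => by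
    by_cases hqi : q = i
    · simp [ind, stdVec, hqi]
    · by_cases hqj : q = j
      · subst hqj
        simp [ind, hj]
      · simp [ind, hqi, hqj]
  refine ⟨fun q => ?_, hI hσ.2 fun q => ?_⟩ <;>
  · have := hind q
    have := hcb q
    have := hσ.1 q
    omega

lemma K_eq_segment (hI : IsMonomialIdeal I) {a b : V3} (ha : a ∈ I) {i : Fin 3} {N m : ℕ}
    (hb : ∀ q, b q = a q + N * stdVec i q)
    (hiso : ∀ σ ∈ K I b, σ.card = 2 → i ∉ σ) (hm0 : 0 < m) (hmN : m < N) :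
    K I (fun q => a q + m * stdVec i q) = {∅, {i}} := by
  ext σ
  constructor
  · intro hσ
    have hsub : σ ⊆ {i} := fun j hj => by
      have hcb : ∀ q, a q + m * stdVec i q + stdVec i q ≤ b q := fun q => by
        rw [hb q, add_assoc, ← Nat.succ_mul]
        exact Nat.add_le_add_left (Nat.mul_le_mul_right _ hmN) _
      have hpair := pair_mem_K_of_mem_K hI hcb hσ hj
      by_contra hji
      exact hiso _ hpair (Finset.card_pair (Ne.symm (by simpa using hji)))
        (Finset.mem_insert_self i {j})
    simpa [or_comm] using Finset.subset_singleton_iff.1 hsub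
  · rintro (rfl | rfl) <;> refine mem_K_of_add_ind_le hI ha fun q => ?_ <;>
      by_cases hqi : q = i <;> simp [ind, stdVec, hqi]
    omega

end Koszul

section LatticePath

@[simp]
lemma pt_zero (a : V3) {N : ℕ} (d : Fin N → Fin 3) : pt a d 0 = a := by
  funext q
  simp [pt]

lemma pt_const (a : V3) (i : Fin 3) {N m : ℕ} (hm : m ≤ N) :
    pt a (fun _ : Fin N => i) m = fun q => a q + m * stdVec i q := by
  funext q
  rw [pt, Finset.sum_congr rfl fun m' hm' => dif_pos ((Finset.mem_range.1 hm').trans_le hm),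
    Finset.sum_const, Finset.card_range, smul_eq_mul]

lemma pt_const_eq {a b : V3} {i : Fin 3} {N : ℕ} (hb : ∀ q, b q = a q + N * stdVec i q) :
    pt a (fun _ : Fin N => i) N = b := by
  rw [pt_const a i le_rfl]
  exact funext fun q => (hb q).symm

lemma setOf_pt_eq_singleton {a b : V3} {i : Fin 3} {N : ℕ}
    (hb : ∀ q, b q = a q + N * stdVec i q) :
    {d : Fin N → Fin 3 | pt a d N = b} = {fun _ => i} := by
  ext d
  refine ⟨fun hd => funext fun m => ?_, fun hd => ?_⟩
  · by_contra hmi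
    have hstep : 1 ≤ ∑ m' ∈ Finset.range N,
        (if h : m' < N then stdVec (d ⟨m', h⟩) (d m) else 0) := by
      refine le_trans ?_ (Finset.single_le_sum (fun _ _ => Nat.zero_le _)
        (Finset.mem_range.2 m.isLt))
      simp [stdVec]
    have hdm := congrFun hd (d m)
    rw [pt, hb, show stdVec i (d m) = 0 from if_neg hmi] at hdm
    omega
  · rw [Set.mem_singleton_iff.1 hd]
    exact pt_const_eq hb

lemma nlen_eq {a b : V3} {i : Fin 3} {n : ℕ} (hb : ∀ q, b q = a q + n * stdVec i q) :
    nlen a b = n := by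
  simp [nlen, hb, stdVec]

end LatticePath

section ForcedFences

def interiorStakes (N : ℕ) : Fin (N + 1) → Finset (Finset (Fin 3)) :=
  fun m => if 0 < (m : ℕ) ∧ (m : ℕ) < N then {∅} else ∅

def interiorShrubberies (i : Fin 3) (N : ℕ) : Fin (N + 1) → Finset (Finset (Fin 3)) :=
  fun m => if 0 < (m : ℕ) ∧ (m : ℕ) < N then {{i}} else ∅

def fenceFaces (i : Fin 3) (N : ℕ) : Fin (N + 1) → Finset (Fin 3) :=
  Fin.cases ∅ fun _ => {i}

lemma fenceFaces_of_ne_zero {i : Fin 3} {N : ℕ} {m : Fin (N + 1)} (hm : (m : ℕ) ≠ 0) :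
    fenceFaces i N m = {i} := by
  obtain ⟨m', rfl⟩ := Fin.exists_succ_eq.2 (Fin.ne_of_val_ne hm)
  rfl

variable {I : Set V3} {a : V3} {i : Fin 3} {N : ℕ}

lemma isHedgerow_iff_isStakeSet {d : Fin N → Fin 3} (hKa : K I a = {∅})
    (hKint : ∀ m, 0 < m → m < N → K I (pt a d m) = {∅, {i}}) (h : HRData N) :
    IsHedgerow k I a d 1 h ↔ IsStakeSet k (K I (pt a d N)) 1 h.1 ∧
      h.2 = (interiorStakes N, interiorShrubberies i N, ∅) := by
  obtain ⟨Sb, S, T, Ta⟩ := h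
  simp only [IsHedgerow, Prod.mk.injEq, hKa, Nat.sub_self, isShrubbery_point_iff]
  refine and_congr_right fun _ => ⟨fun ⟨hint, hends, hTa⟩ => ⟨?_, ?_, hTa⟩, ?_⟩
  · funext m
    unfold interiorStakes
    split_ifs with hm
    · simpa [hKint _ hm.1 hm.2, isStakeSet_segment_iff] using (hint m hm.1 hm.2).1
    · exact (hends m (by omega)).1
  · funext m
    unfold interiorShrubberies
    split_ifs with hm
    · simpa [hKint _ hm.1 hm.2, isShrubbery_segment_iff] using (hint m hm.1 hm.2).2
    · exact (hends m (by omega)).2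
  · rintro ⟨rfl, rfl, rfl⟩
    refine ⟨fun m h0 hN => ?_, fun m hm => ?_, rfl⟩
    · simp [hKint _ h0 hN, interiorStakes, interiorShrubberies, h0, hN, isStakeSet_segment_iff,
        isShrubbery_segment_iff]
    · simp only [interiorStakes, interiorShrubberies]
      split_ifs <;> first | omega | simp

lemma setOf_isHedgerow_eq {d : Fin N → Fin 3} (hKa : K I a = {∅})
    (hKint : ∀ m, 0 < m → m < N → K I (pt a d m) = {∅, {i}}) :
    {h | IsHedgerow k I a d 1 h} = (fun S => (S, interiorStakes N, interiorShrubberies i N, ∅)) ''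
      {S | IsStakeSet k (K I (pt a d N)) 1 S} := by
  ext h
  simp only [Set.mem_ofPred_eq, Set.mem_image, isHedgerow_iff_isStakeSet k hKa hKint]
  constructor
  · rintro ⟨hS, h2⟩
    exact ⟨h.1, hS, by rw [← h2]⟩
  · rintro ⟨S, hS, rfl⟩
    exact ⟨hS, rfl⟩

lemma isFence_const_iff (hN : 1 ≤ N) (hKa : K I a = {∅})
    (hKint : ∀ m, 0 < m → m < N → K I (pt a (fun _ : Fin N => i) m) = {∅, {i}})
    (hi : {i} ∈ K I (pt a (fun _ : Fin N => i) N))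
    (hiso : ∀ σ ∈ K I (pt a (fun _ : Fin N => i) N), σ.card = 2 → i ∉ σ) (f : FData N) :
    IsFence k I a (fun _ => i) 1 ∅ {i} f ↔
      IsHedgerow k I a (fun _ => i) 1 f.1 ∧ f.2 = (fenceFaces i N, fun _ => ∅) := by
  obtain ⟨h, τ, σ⟩ := f
  simp only [Prod.mk.injEq]
  constructor
  · rintro ⟨hH, hτ, hσ, hτ0, hσN, -, herase, -, -⟩
    dsimp only at hH hτ hσ hτ0 hσN herase
    have hσ_empty : σ = fun _ => ∅ := funext fun m => by
      by_cases hm : (m : ℕ) < N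
      · exact Finset.card_eq_zero.1 (hσ m hm).2
      · rwa [show m = Fin.last N from Fin.ext (by have := m.isLt; simp; omega)]
    refine ⟨hH, funext fun m => ?_, hσ_empty⟩
    induction m using Fin.cases with
    | zero => exact hτ0
    | succ m =>
      have hcard := (hτ m.succ (Fin.succ_pos m)).2
      have her := herase m
      rw [hσ_empty, eq_comm, Finset.erase_eq_empty_iff] at her
      rcases her with hτm | hτm
      · simp [hτm] at hcard
      · exact hτm
  · rintro ⟨hH, rfl, rfl⟩
    obtain ⟨hS, h2⟩ := (isHedgerow_iff_isStakeSet k hKa hKint h).1 hH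
    obtain ⟨Sb, S, T, Ta⟩ := h
    simp only [Prod.mk.injEq] at h2 hS
    obtain ⟨rfl, rfl, rfl⟩ := h2
    have hlast : ((Fin.last N : Fin (N + 1)) : ℕ) ≠ 0 := by simp; omega
    refine ⟨hH, fun m hm => ?_, fun m hm => ?_, rfl, rfl, ?_, fun m => ?_, fun m h0 hN => ?_, ?_⟩
      <;> dsimp only
    · rw [fenceFaces_of_ne_zero hm.ne']
      rcases (Nat.lt_or_ge m N) with hmN | hmN
      · simp [faces, hKint _ hm hmN]
      · rw [show (m : ℕ) = N by omega]
        exact ⟨hi, rfl⟩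
    · rcases Nat.eq_zero_or_pos m with hm0 | hm0
      · simp [faces, hm0, hKa]
      · simp [faces, hKint _ hm0 hm]
    · simp [fenceFaces_of_ne_zero hlast, hedgeRim_singleton_of_isolated hi hiso hS]
    · simp [fenceFaces]
    · simp [interiorStakes, interiorShrubberies, h0, hN, fenceFaces_of_ne_zero h0.ne',
        shrub_segment]
    · simp [circuit_empty_empty]

lemma weight_fenceFaces_eq_one (hN : 1 ≤ N) (hKa : K I a = {∅})
    (hKint : ∀ m, 0 < m → m < N → K I (pt a (fun _ : Fin N => i) m) = {∅, {i}})
    (hi : {i} ∈ K I (pt a (fun _ : Fin N => i) N))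
    (hiso : ∀ σ ∈ K I (pt a (fun _ : Fin N => i) N), σ.card = 2 → i ∉ σ) {h : HRData N}
    (hH : IsHedgerow k I a (fun _ => i) 1 h) :
    weight k I a (fun _ => i) 1 ∅ {i} (h, fenceFaces i N, fun _ => ∅) = 1 := by
  obtain ⟨hS, h2⟩ := (isHedgerow_iff_isStakeSet k hKa hKint h).1 hH
  obtain ⟨Sb, S, T, Ta⟩ := h
  simp only [Prod.mk.injEq] at h2 hS
  obtain ⟨rfl, rfl, rfl⟩ := h2
  have hlast : ((Fin.last N : Fin (N + 1)) : ℕ) ≠ 0 := by simp; omega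
  have hshrubs : ∀ m : Fin (N + 1), (if 0 < (m : ℕ) ∧ (m : ℕ) < N then
      shrub k (interiorStakes N m) (interiorShrubberies i N m) ∅ (fenceFaces i N m) else 1) = 1 :=
    fun m => by
      split_ifs with hm
      · simp [interiorStakes, interiorShrubberies, hm, fenceFaces_of_ne_zero hm.1.ne',
          shrub_segment]
      · rfl
  rw [weight]
  dsimp only
  rw [fenceFaces_of_ne_zero hlast, hedgeRim_singleton_of_isolated hi hiso hS,
    Finset.prod_eq_one fun m _ => hshrubs m, circuit_empty_empty]
  simp [fenceFaces]

lemma setOf_isFence_eq (hN : 1 ≤ N) (hKa : K I a = {∅})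
    (hKint : ∀ m, 0 < m → m < N → K I (pt a (fun _ : Fin N => i) m) = {∅, {i}})
    (hi : {i} ∈ K I (pt a (fun _ : Fin N => i) N))
    (hiso : ∀ σ ∈ K I (pt a (fun _ : Fin N => i) N), σ.card = 2 → i ∉ σ) :
    {f | IsFence k I a (fun _ => i) 1 ∅ {i} f} =
      (fun h => (h, fenceFaces i N, fun _ => ∅)) '' {h | IsHedgerow k I a (fun _ => i) 1 h} := by
  ext f
  simp only [Set.mem_ofPred_eq, Set.mem_image, isFence_const_iff k hN hKa hKint hi hiso]
  constructor
  · rintro ⟨hH, h2⟩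
    exact ⟨f.1, hH, by rw [← h2]⟩
  · rintro ⟨h, hH, rfl⟩
    exact ⟨hH, rfl⟩

lemma delta_eq_ncard_isStakeSet {d : Fin N → Fin 3} (hKa : K I a = {∅})
    (hKint : ∀ m, 0 < m → m < N → K I (pt a d m) = {∅, {i}}) :
    Delta k I a d 1 = {S | IsStakeSet k (K I (pt a d N)) 1 S}.ncard := by
  rw [Delta, ← Set.coe_ofPred, Nat.card_coe_set_eq, setOf_isHedgerow_eq k hKa hKint,
    Set.ncard_image_of_injective _ fun _ _ h => congrArg Prod.fst h]

lemma finsum_weight_eq_delta (hN : 1 ≤ N) (hKa : K I a = {∅})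
    (hKint : ∀ m, 0 < m → m < N → K I (pt a (fun _ : Fin N => i) m) = {∅, {i}})
    (hi : {i} ∈ K I (pt a (fun _ : Fin N => i) N))
    (hiso : ∀ σ ∈ K I (pt a (fun _ : Fin N => i) N), σ.card = 2 → i ∉ σ) :
    ∑ᶠ f ∈ {f | IsFence k I a (fun _ : Fin N => i) 1 ∅ {i} f},
      weight k I a (fun _ => i) 1 ∅ {i} f = Delta k I a (fun _ : Fin N => i) 1 := by
  have hweights : ∀ h ∈ {h | IsHedgerow k I a (fun _ : Fin N => i) 1 h},
      weight k I a (fun _ => i) 1 ∅ {i} (h, fenceFaces i N, fun _ => ∅) = 1 :=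
    fun _ hH => weight_fenceFaces_eq_one k hN hKa hKint hi hiso hH
  rw [setOf_isFence_eq k hN hKa hKint hi hiso,
    finsum_mem_image fun _ _ _ _ h => congrArg Prod.fst h, finsum_mem_congr rfl hweights, Delta,
    ← Set.coe_ofPred, Nat.card_coe_set_eq, ← finsum_one, Nat.cast_finsum_mem (Set.toFinite _),
    Nat.cast_one]

end ForcedFences

lemma natCast_ne_zero_of_le_four {F : Type*} [Field F] (h2 : (2 : F) ≠ 0) (h3 : (3 : F) ≠ 0)
    {m : ℕ} (hm0 : 0 < m) (hm4 : m ≤ 4) : (m : F) ≠ 0 := by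
  interval_cases m
  · simp
  · exact_mod_cast h2
  · exact_mod_cast h3
  · rw [show ((4 : ℕ) : F) = 2 * 2 by norm_num]
    exact mul_ne_zero h2 h2

lemma Dpath_const_eq_one (h2 : (2 : k) ≠ 0) (h3 : (3 : k) ≠ 0) {I : Set V3}
    (hI : IsMonomialIdeal I) {a b : V3} {i : Fin 3} {N : ℕ} (hN : 1 ≤ N)
    (hb : ∀ q, b q = a q + N * stdVec i q) (hi : {i} ∈ K I b)
    (hiso : ∀ σ ∈ K I b, σ.card = 2 → i ∉ σ) (hgen : IsMinGen I a) :
    Dpath k I a (fun _ : Fin N => i) 1 ∅ {i} = 1 := by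
  have hptN : pt a (fun _ : Fin N => i) N = b := pt_const_eq hb
  have hKa := K_eq_of_isMinGen hgen
  have hKint : ∀ m, 0 < m → m < N → K I (pt a (fun _ : Fin N => i) m) = {∅, {i}} :=
    fun m hm0 hmN => by
      rw [pt_const a i hmN.le]
      exact K_eq_segment hI hgen.1 hb hiso hm0 hmN
  rw [← hptN] at hi hiso
  have hΔ : (Delta k I a (fun _ : Fin N => i) 1 : k) ≠ 0 := by
    rw [delta_eq_ncard_isStakeSet k hKa hKint]
    refine natCast_ne_zero_of_le_four h2 h3 ?_ (ncard_isStakeSet_le_four hi hiso)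
    exact (Set.ncard_pos (Set.toFinite _)).2 (exists_isStakeSet k (K_isLowerSet hI _) 1)
  rw [Dpath, finsum_weight_eq_delta k hN hKa hKint hi hiso, inv_mul_cancel₀ hΔ]

theorem statement0_general (k : Type) [Field k] (h2 : (2:k) ≠ 0) (h3 : (3:k) ≠ 0)
    (I : Set V3) (hI : IsMonomialIdeal I) (a b : V3) (i : Fin 3) (n : ℕ) (hn : 1 ≤ n)
    (hb : ∀ q, b q = a q + n * stdVec i q)
    (hvertex : ({i} : Finset (Fin 3)) ∈ K I b)
    (hisolated : ∀ σ ∈ K I b, σ.card = 2 → i ∉ σ)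
    (hgen : IsMinGen I a) :
    D k I a b 1 (∅ : Finset (Fin 3)) ({i} : Finset (Fin 3)) = 1 := by
  have hlen : nlen a b = n := nlen_eq hb
  have hb' : ∀ q, b q = a q + nlen a b * stdVec i q := hlen ▸ hb
  rw [D, setOf_pt_eq_singleton hb', finsum_mem_singleton]
  exact Dpath_const_eq_one k h2 h3 hI (hlen ▸ hn) hb' hvertex hisolated hgen

/-- If `i` is an isolated vertex of the disconnected Koszul complex
`K^b I` and `a` is the minimal generator degree with `b - a = n·e_i`, then
`D_{∅,i}^{a,b} = 1`. -/
theorem statement0 (k : Type) [Field k] (h2 : (2:k) ≠ 0) (h3 : (3:k) ≠ 0)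
    (I : Set V3) (hI : IsMonomialIdeal I) (a b : V3) (i : Fin 3) (n : ℕ) (hn : 1 ≤ n)
    (hb : ∀ q, b q = a q + n * stdVec i q)
    (hH0 : H0nontrivial k (K I b))
    (hvertex : ({i} : Finset (Fin 3)) ∈ K I b)
    (hisolated : ∀ σ ∈ K I b, σ.card = 2 → i ∉ σ)
    (hgen : IsMinGen I a) :
    D k I a b 1 (∅ : Finset (Fin 3)) ({i} : Finset (Fin 3)) = 1 :=
  statement0_general k h2 h3 I hI a b i n hn hb hvertex hisolated hgen

end Sylvan

end
end

section
/- Let a ≼ b in ℕ³ with K^b I equal to ⟨ij,ik,jk⟩ and with K^a I disconnected (equivalently dim_k H̃₀(K^a I;k) ≠ 0), and let λ = (a = b_j, …, b₁, b₀ = b) ∈ Λ(a,b) be a lattice path with b − b₁ = e_i. Then the degree-1 contribution along λ satisfies D_{v,{j,k}}^{a,b,λ} = 0 for every vertex v of K^a I, where {j,k} is the edge of K^b I opposite to i. -/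
/-! `K^b I` has no triangle, so `B̃₁(K^b I) = 0` and the hedge rim of `{j,l}` is `{j,l}` itself:
every fence starts at `τ₀ = {j,l}`. Its first step deletes `i ∉ {j,l}`, which leaves the edge
`{j,l}` where the stake `σ₁` has to be a vertex. So there are no fences and the sum is empty. -/

open Classical

noncomputable section

namespace Sylvan

variable (k : Type) [Field k]

theorem faces_eq_empty_of_hasFacets {Kc F : Set (Finset (Fin 3))} (hK : hasFacets Kc F)
    {c : ℕ} (hF : ∀ g ∈ F, g.card < c) : faces Kc c = ∅ := by
  refine Set.eq_empty_of_forall_notMem fun σ ⟨hσ, hcard⟩ => ?_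
  rw [hK] at hσ
  obtain ⟨g, hg, hσg⟩ := hσ
  have := Finset.card_le_card hσg
  have := hF g hg
  omega

theorem bdries_eq_bot_of_faces_eq_empty {Kc : Set (Finset (Fin 3))} {c : ℕ}
    (hK : faces Kc (c + 1) = ∅) : bdries k Kc c = ⊥ := by
  simp [bdries, chains, hK, sset]

theorem hedgeRim_eq_single_of_bdries_eq_bot {Kc : Set (Finset (Fin 3))} {c : ℕ}
    {S : Finset (Finset (Fin 3))} {τ : Finset (Fin 3)} (hB : bdries k Kc c = ⊥)
    (hrim : hedgeRim k Kc c S τ ≠ 0) : hedgeRim k Kc c S τ = Finsupp.single τ 1 := by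
  unfold hedgeRim at hrim ⊢
  split
  case isTrue h =>
    have hmem := hB.le h.exists.choose_spec.2
    exact (sub_eq_zero.mp ((Submodule.mem_bot k).mp hmem)).symm
  case isFalse h => simp [h] at hrim

theorem IsFence.top_eq_of_bdries_eq_bot {I : Set V3} {a : V3} {n : ℕ} {d : Fin n → Fin 3}
    {c : ℕ} {σbot τtop : Finset (Fin 3)} {f : FData n}
    (hf : IsFence k I a d c σbot τtop f) (hB : bdries k (K I (pt a d n)) c = ⊥) :
    f.2.1 (Fin.last n) = τtop := by
  have hrim := hf.2.2.2.2.2.1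
  rw [hedgeRim_eq_single_of_bdries_eq_bot k hB (fun h => hrim (by rw [h]; rfl))] at hrim
  by_contra hne
  exact hrim (Finsupp.single_eq_of_ne hne)

theorem IsFence.card_erase_eq {I : Set V3} {a : V3} {n : ℕ} {d : Fin n → Fin 3}
    {c : ℕ} {σbot τtop : Finset (Fin 3)} {f : FData n}
    (hf : IsFence k I a d c σbot τtop f) (m : Fin n) :
    ((f.2.1 m.succ).erase (d m)).card = c - 1 := by
  rw [← hf.2.2.2.2.2.2.1 m]
  exact (hf.2.2.1 m.castSucc m.castSucc_lt_last).2

theorem Dpath_eq_zero_of_forall_not_isFence {I : Set V3} {a : V3} {n : ℕ} {d : Fin n → Fin 3}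
    {c : ℕ} {σbot τtop : Finset (Fin 3)} (h : ∀ f, ¬ IsFence k I a d c σbot τtop f) :
    Dpath k I a d c σbot τtop = 0 := by
  simp [Dpath, h]

/-- If `K^b I` is the full triangle boundary `⟨ij,ik,jk⟩`,
`K^a I` is disconnected, and the lattice path `λ` first moves back from `b` in the
`i`-direction, then the contribution along `λ` to the entry `D_{v,jk}` is zero for
every vertex `v` of `K^a I`. -/
theorem statement4 (k : Type) [Field k]
    (I : Set V3) (a : V3)
    (i j l : Fin 3) (hij : i ≠ j) (hil : i ≠ l) (hjl : j ≠ l)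
    (n : ℕ) (hn : 0 < n) (d : Fin n → Fin 3)
    (hb : hasFacets (K I (pt a d n)) {{i, j}, {i, l}, {j, l}})
    (hlast : d ⟨n - 1, by omega⟩ = i)
    (v : Fin 3) :
    Dpath k I a d 2 ({v} : Finset (Fin 3)) ({j, l} : Finset (Fin 3)) = 0 := by
  have hB : bdries k (K I (pt a d n)) 2 = ⊥ := by
    refine bdries_eq_bot_of_faces_eq_empty k (faces_eq_empty_of_hasFacets hb ?_)
    simp only [Set.mem_insert_iff, Set.mem_singleton_iff]
    rintro g (rfl | rfl | rfl) <;> exact (Finset.card_le_two).trans_lt (by norm_num)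
  refine Dpath_eq_zero_of_forall_not_isFence k fun f hf => ?_
  have hcard := hf.card_erase_eq k ⟨n - 1, by omega⟩
  have hsucc : (⟨n - 1, by omega⟩ : Fin n).succ = Fin.last n :=
    Fin.ext (by simp only [Fin.val_succ, Fin.val_last]; omega)
  rw [hsucc, hf.top_eq_of_bdries_eq_bot k hB, hlast,
    Finset.erase_eq_of_notMem (by simp [hij, hil]), Finset.card_pair hjl] at hcard
  omega

end Sylvan

end
end
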